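/- Let F be a field of characteristic not 2 or 3, let k ∈ F be nonzero, and let K = F[z]/(z² − k) with norm N = Algebra.norm from K to F. Let f be an integer-matrix binary cubic form over F with reduced discriminant 4k. Then the stabilizer of f in SL₂(F) (under the action by linear change of variable) is isomorphic as a group to (Res_F^K μ₃)_{N=1} = { x ∈ K^× : x³ = 1 and N(x) = 1 }, the group of cube roots of unity in K of norm 1. -/

import Mathlib

/-!
STATEMENT 6: Let F be a field of characteristic not 2 or 3, k ∈ F nonzero, and
K = F[z]/(z² − k) with norm N = Algebra.norm.  For any integer-matrix binary cubic form
f over F with reduced discriminant 4k, the stabilizer of f in SL₂(F) (acting by linear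
change of variable) is isomorphic as a group to
(Res_F^K μ₃)_{N=1} = { x ∈ K^× : x³ = 1 and N(x) = 1 }.
-/

open Matrix MatrixGroups

/-- An (integer-matrix) binary cubic form over `R`: the quadruple `(a,b,c,d)` stands for
`f(x,y) = a·x³ + 3b·x²y + 3c·xy² + d·y³`. -/
abbrev BCF (R : Type*) := R × R × R × R

/-- The reduced discriminant `disc(f) = a²d² − 3b²c² − 6abcd + 4ac³ + 4b³d` of the
integer-matrix binary cubic form `(a,b,c,d)`. -/
def bcfDisc {R : Type*} [CommRing R] (f : BCF R) : R :=
  f.1 ^ 2 * f.2.2.2 ^ 2 - 3 * f.2.1 ^ 2 * f.2.2.1 ^ 2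
    - 6 * f.1 * f.2.1 * f.2.2.1 * f.2.2.2 + 4 * f.1 * f.2.2.1 ^ 3 + 4 * f.2.1 ^ 3 * f.2.2.2

/-- The value `f(x,y)` of the integer-matrix binary cubic form `f = (a,b,c,d)`. -/
def bcfVal {R : Type*} [CommRing R] (f : BCF R) (x y : R) : R :=
  f.1 * x ^ 3 + 3 * f.2.1 * x ^ 2 * y + 3 * f.2.2.1 * x * y ^ 2 + f.2.2.2 * y ^ 3

/-- The action of a 2×2 matrix `γ = ((p,q),(r,s))` on integer-matrix binary cubic forms
by linear change of variable, `(γ·f)(x,y) = f(px+qy, rx+sy)`, written in coordinates. -/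
def bcfAct {R : Type*} [CommRing R] (γ : Matrix (Fin 2) (Fin 2) R) (f : BCF R) : BCF R :=
  (f.1 * γ 0 0 ^ 3 + 3 * f.2.1 * γ 0 0 ^ 2 * γ 1 0 + 3 * f.2.2.1 * γ 0 0 * γ 1 0 ^ 2
     + f.2.2.2 * γ 1 0 ^ 3,
   f.1 * γ 0 0 ^ 2 * γ 0 1 + f.2.1 * (γ 0 0 ^ 2 * γ 1 1 + 2 * γ 0 0 * γ 0 1 * γ 1 0)
     + f.2.2.1 * (2 * γ 0 0 * γ 1 0 * γ 1 1 + γ 0 1 * γ 1 0 ^ 2) + f.2.2.2 * γ 1 0 ^ 2 * γ 1 1,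
   f.1 * γ 0 0 * γ 0 1 ^ 2 + f.2.1 * (2 * γ 0 0 * γ 0 1 * γ 1 1 + γ 0 1 ^ 2 * γ 1 0)
     + f.2.2.1 * (γ 0 0 * γ 1 1 ^ 2 + 2 * γ 0 1 * γ 1 0 * γ 1 1) + f.2.2.2 * γ 1 0 * γ 1 1 ^ 2,
   f.1 * γ 0 1 ^ 3 + 3 * f.2.1 * γ 0 1 ^ 2 * γ 1 1 + 3 * f.2.2.1 * γ 0 1 * γ 1 1 ^ 2
     + f.2.2.2 * γ 1 1 ^ 3)

/-- The action is by substitution: `(γ·f)(x,y) = f(px+qy, rx+sy)`. -/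
theorem bcfAct_val {R : Type*} [CommRing R] (γ : Matrix (Fin 2) (Fin 2) R) (f : BCF R)
    (x y : R) : bcfVal (bcfAct γ f) x y
      = bcfVal f (γ 0 0 * x + γ 0 1 * y) (γ 1 0 * x + γ 1 1 * y) := by
  simp only [bcfAct, bcfVal]; ring

theorem bcfAct_one {R : Type*} [CommRing R] (f : BCF R) : bcfAct (1 : Matrix (Fin 2) (Fin 2) R) f = f := by
  obtain ⟨a, b, c, d⟩ := f
  simp [bcfAct, Matrix.one_apply]

theorem bcfAct_mul {R : Type*} [CommRing R] (g h : Matrix (Fin 2) (Fin 2) R) (f : BCF R) :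
    bcfAct (g * h) f = bcfAct h (bcfAct g f) := by
  obtain ⟨a, b, c, d⟩ := f
  simp only [bcfAct, Matrix.mul_apply, Fin.sum_univ_two, Prod.mk.injEq]
  refine ⟨by ring, by ring, by ring, by ring⟩

noncomputable section

open Polynomial

/-- The quadratic étale algebra `K = F[z]/(z² − k)`. -/
abbrev QuadAlg (F : Type*) [Field F] (k : F) : Type _ :=
  AdjoinRoot (Polynomial.X ^ 2 - Polynomial.C k : Polynomial F)

variable (F : Type*) [Field F] (k : F)

/-- The stabilizer of the binary cubic form `f` in `SL₂(F)`. -/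
def bcfStab (f : BCF F) : Subgroup (Matrix.SpecialLinearGroup (Fin 2) F) where
  carrier := {γ | bcfAct (γ : Matrix (Fin 2) (Fin 2) F) f = f}
  one_mem' := bcfAct_one f
  mul_mem' := by
    intro a b ha hb
    have : bcfAct ((a : Matrix (Fin 2) (Fin 2) F) * (b : Matrix (Fin 2) (Fin 2) F)) f = f := by
      rw [bcfAct_mul, ha, hb]
    simpa using this
  inv_mem' := by
    intro a ha
    have h := bcfAct_mul (a : Matrix (Fin 2) (Fin 2) F) ((a⁻¹ : _) : Matrix (Fin 2) (Fin 2) F) f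
    rw [Set.mem_setOf_eq] at ha
    rw [ha] at h
    have h2 : ((a : Matrix (Fin 2) (Fin 2) F) * ((a⁻¹ : _) : Matrix (Fin 2) (Fin 2) F)) = 1 := by
      rw [← Matrix.SpecialLinearGroup.coe_mul, mul_inv_cancel,
        Matrix.SpecialLinearGroup.coe_one]
    rw [h2, bcfAct_one] at h
    exact h.symm

/-- The group `(Res_F^K μ₃)_{N=1}` of cube roots of unity in `K` of norm 1, as a
subgroup of `K^×`. -/
def mu3NormOne : Subgroup (QuadAlg F k)ˣ where
  carrier := {x | x ^ 3 = 1 ∧ Algebra.norm F (x : QuadAlg F k) = 1}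
  one_mem' := ⟨one_pow 3, by simp⟩
  mul_mem' := by
    rintro a b ⟨ha1, ha2⟩ ⟨hb1, hb2⟩
    refine ⟨by rw [mul_pow, ha1, hb1, one_mul], ?_⟩
    rw [Units.val_mul, _root_.map_mul, ha2, hb2, one_mul]
  inv_mem' := by
    rintro a ⟨ha1, ha2⟩
    refine ⟨by rw [inv_pow, ha1, inv_one], ?_⟩
    have h := congrArg (Algebra.norm F) a.mul_inv
    rw [_root_.map_mul, _root_.map_one, ha2, one_mul] at h
    exact h


/-!
The Hessian `H` of `f` is a binary quadratic form of discriminant `disc f = 4k`, and it is a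
covariant: every `γ ∈ SL₂(F)` fixing `f` preserves `H`, hence commutes with a matrix `J` built
from `H` with `J² = k`. As `J` is not scalar, its centralizer is `F[J] ≅ K`, which gives an
embedding `K → M₂(F)` with `det = N` whose image contains the stabilizer. Finally `t + uJ` moves
`f` to `Re(x³) f + Im(x³) Q / 2`, where `x = t + u√k` and `Q` is the cubic covariant of `f`; since
`f` and `Q` are independent when `disc f ≠ 0`, the image of `x` fixes `f` exactly when `x³ = 1`.
-/

open QuadraticAlgebra

section BinaryQuadraticForm

variable {R : Type*} [CommRing R]

/-- `(A, B, C)` stands for `A x² + B xy + C y²`, and `quadAct γ H` for `H(px + qy, rx + sy)`. -/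
def quadAct (γ : Matrix (Fin 2) (Fin 2) R) : R × R × R → R × R × R
  | (A, B, C) =>
    (A * γ 0 0 ^ 2 + B * γ 0 0 * γ 1 0 + C * γ 1 0 ^ 2,
     2 * A * γ 0 0 * γ 0 1 + B * (γ 0 0 * γ 1 1 + γ 0 1 * γ 1 0) + 2 * C * γ 1 0 * γ 1 1,
     A * γ 0 1 ^ 2 + B * γ 0 1 * γ 1 1 + C * γ 1 1 ^ 2)

def quadDisc : R × R × R → R
  | (A, B, C) => B ^ 2 - 4 * A * C

/-- `2 ε S`, where `S = !![A, B/2; B/2, C]` is the Gram matrix of `H` and `ε = !![0, -1; 1, 0]`;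
for `γ ∈ SL₂` one has `γᵀ ε γ = ε`, so `γ` preserves `H` iff it commutes with `quadGen H`. -/
def quadGen : R × R × R → Matrix (Fin 2) (Fin 2) R
  | (A, B, C) => !![-B, -2 * C; 2 * A, B]

theorem quadGen_mul_self (H : R × R × R) : quadGen H * quadGen H = quadDisc H • 1 := by
  obtain ⟨A, B, C⟩ := H
  simp only [quadGen, quadDisc, Matrix.mul_fin_two, Matrix.one_fin_two, Matrix.smul_of,
    Matrix.smul_cons, smul_eq_mul, Matrix.smul_empty, EmbeddingLike.apply_eq_iff_eq,
    Matrix.vecCons_inj, and_true]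
  refine ⟨⟨?_, ?_⟩, ?_, ?_⟩ <;> ring

theorem smul_one_add_smul_quadGen (t u : R) (H : R × R × R) :
    t • 1 + u • quadGen H = !![t - u * H.2.1, -(2 * u * H.2.2); 2 * u * H.1, t + u * H.2.1] := by
  obtain ⟨A, B, C⟩ := H
  simp only [quadGen, Matrix.one_fin_two, Matrix.smul_of, Matrix.of_add_of, Matrix.smul_cons,
    smul_eq_mul, Matrix.smul_empty, Matrix.add_cons, Matrix.head_cons, Matrix.tail_cons,
    Matrix.empty_add_empty, EmbeddingLike.apply_eq_iff_eq, Matrix.vecCons_inj, and_true]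
  refine ⟨⟨?_, ?_⟩, ?_, ?_⟩ <;> ring

theorem det_smul_one_add_smul_quadGen (t u : R) (H : R × R × R) :
    (t • 1 + u • quadGen H).det = t ^ 2 - quadDisc H * u ^ 2 := by
  rw [smul_one_add_smul_quadGen, Matrix.det_fin_two_of]
  obtain ⟨A, B, C⟩ := H
  dsimp only [quadDisc]
  ring

theorem commute_quadGen_of_quadAct_eq {γ : Matrix (Fin 2) (Fin 2) R} {H : R × R × R}
    (hdet : γ.det = 1) (h : quadAct γ H = H) : Commute γ (quadGen H) := by
  obtain ⟨A, B, C⟩ := H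
  simp only [quadAct, Prod.mk.injEq] at h
  obtain ⟨hA, hB, hC⟩ := h
  rw [Matrix.det_fin_two] at hdet
  rw [Matrix.eta_fin_two γ, Commute, SemiconjBy]
  simp only [quadGen, Matrix.mul_fin_two, EmbeddingLike.apply_eq_iff_eq, Matrix.vecCons_inj,
    and_true]
  refine ⟨⟨?_, ?_⟩, ?_, ?_⟩
  · linear_combination -2 * γ 0 1 * hA + γ 0 0 * hB - (B * γ 0 0 + 2 * C * γ 1 0) * hdet
  · linear_combination 2 * γ 0 0 * hC - γ 0 1 * hB - (B * γ 0 1 + 2 * C * γ 1 1) * hdet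
  · linear_combination -2 * γ 1 1 * hA + γ 1 0 * hB + (2 * A * γ 0 0 + B * γ 1 0) * hdet
  · linear_combination 2 * γ 0 1 * hA - γ 0 0 * hB + (B * γ 0 0 + 2 * C * γ 1 0) * hdet

end BinaryQuadraticForm

section BinaryCubicForm

variable {R : Type*} [CommRing R]

def bcfHessian : BCF R → R × R × R
  | (a, b, c, d) => (b ^ 2 - a * c, b * c - a * d, c ^ 2 - b * d)

theorem quadDisc_bcfHessian (f : BCF R) : quadDisc (bcfHessian f) = bcfDisc f := by
  obtain ⟨a, b, c, d⟩ := f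
  simp only [bcfHessian, quadDisc, bcfDisc]
  ring

theorem bcfHessian_bcfAct (γ : Matrix (Fin 2) (Fin 2) R) (f : BCF R) :
    bcfHessian (bcfAct γ f) = γ.det ^ 2 • quadAct γ (bcfHessian f) := by
  obtain ⟨a, b, c, d⟩ := f
  simp only [bcfHessian, bcfAct, quadAct, Matrix.det_fin_two, Prod.smul_mk, smul_eq_mul,
    Prod.mk.injEq]
  refine ⟨by ring, by ring, by ring⟩

def bcfCovariant : BCF R → BCF R
  | (a, b, c, d) =>
    (2 * b ^ 3 - 3 * a * b * c + a ^ 2 * d, b ^ 2 * c - 2 * a * c ^ 2 + a * b * d,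
     2 * b ^ 2 * d - b * c ^ 2 - a * c * d, 3 * b * c * d - 2 * c ^ 3 - a * d ^ 2)

/-- The coefficients are the two coordinates of `(t + u √(disc f))³`. -/
theorem bcfAct_smul_one_add_smul_quadGen (f : BCF R) (t u : R) :
    bcfAct (t • 1 + u • quadGen (bcfHessian f)) f
      = (t ^ 3 + 3 * bcfDisc f * t * u ^ 2) • f
        + (3 * t ^ 2 * u + bcfDisc f * u ^ 3) • bcfCovariant f := by
  rw [smul_one_add_smul_quadGen]
  obtain ⟨a, b, c, d⟩ := f
  simp only [bcfAct, bcfHessian, bcfCovariant, bcfDisc, Matrix.of_apply, Matrix.cons_val',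
    Matrix.cons_val_zero, Matrix.cons_val_one, Matrix.cons_val_fin_one,
    Prod.smul_mk, Prod.mk_add_mk, smul_eq_mul, Prod.mk.injEq]
  refine ⟨by ring, by ring, by ring, by ring⟩

end BinaryCubicForm

section

variable {F k}

theorem Matrix.eq_smul_one_add_smul_of_apply {M γ : Matrix (Fin 2) (Fin 2) F} {t u : F}
    (h00 : γ 0 0 = t + u * M 0 0) (h01 : γ 0 1 = u * M 0 1) (h10 : γ 1 0 = u * M 1 0)
    (h11 : γ 1 1 = t + u * M 1 1) : γ = t • 1 + u • M := by
  ext i j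
  fin_cases i <;> fin_cases j <;> simp [h00, h01, h10, h11]

theorem Matrix.exists_eq_smul_one_add_smul_of_commute {M γ : Matrix (Fin 2) (Fin 2) F}
    (hM : ∀ c : F, M ≠ c • 1) (h : Commute γ M) : ∃ t u : F, γ = t • 1 + u • M := by
  have e := fun i j => congrFun (congrFun h.eq i) j
  simp only [Matrix.mul_apply, Fin.sum_univ_two] at e
  have e00 := e 0 0
  have e01 := e 0 1
  have e10 := e 1 0
  suffices ∃ t u : F, γ 0 0 = t + u * M 0 0 ∧ γ 0 1 = u * M 0 1 ∧ γ 1 0 = u * M 1 0 ∧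
      γ 1 1 = t + u * M 1 1 by
    obtain ⟨t, u, h00, h01, h10, h11⟩ := this
    exact ⟨t, u, Matrix.eq_smul_one_add_smul_of_apply h00 h01 h10 h11⟩
  by_cases hM01 : M 0 1 = 0
  · by_cases hM10 : M 1 0 = 0
    · have hd : M 0 0 - M 1 1 ≠ 0 := by
        intro hd
        apply hM (M 0 0)
        rw [Matrix.eta_fin_two M, Matrix.one_fin_two, Matrix.smul_of, hM01, hM10,
          sub_eq_zero.1 hd]
        simp
      refine ⟨γ 0 0 - (γ 0 0 - γ 1 1) / (M 0 0 - M 1 1) * M 0 0,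
        (γ 0 0 - γ 1 1) / (M 0 0 - M 1 1), by ring, ?_, ?_, ?_⟩
      · rw [hM01, mul_zero]
        refine (mul_eq_zero.1 (?_ : γ 0 1 * (M 0 0 - M 1 1) = 0)).resolve_right hd
        linear_combination -e01 + (γ 0 0 - γ 1 1) * hM01
      · rw [hM10, mul_zero]
        refine (mul_eq_zero.1 (?_ : γ 1 0 * (M 0 0 - M 1 1) = 0)).resolve_right hd
        linear_combination e10 + (γ 0 0 - γ 1 1) * hM10
      · field_simp
        ring
    · refine ⟨γ 0 0 - γ 1 0 / M 1 0 * M 0 0, γ 1 0 / M 1 0, by ring, ?_, by field_simp, ?_⟩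
      · field_simp
        linear_combination e00
      · field_simp
        linear_combination e10
  · refine ⟨γ 0 0 - γ 0 1 / M 0 1 * M 0 0, γ 0 1 / M 0 1, by ring, by field_simp, ?_, ?_⟩
    · field_simp
      linear_combination -e00
    · field_simp
      linear_combination -e01

theorem Matrix.eq_zero_of_smul_one_add_smul_eq_zero {M : Matrix (Fin 2) (Fin 2) F}
    (hM : ∀ c : F, M ≠ c • 1) {t u : F} (h : t • 1 + u • M = 0) : t = 0 ∧ u = 0 := by
  have hu : u = 0 := by
    by_contra hu
    apply hM (-t / u)
    rw [← inv_smul_smul₀ hu M, eq_neg_of_add_eq_zero_right h, smul_neg, ← neg_smul, smul_smul]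
    congr 1
    ring
  subst hu
  rw [zero_smul, add_zero, smul_eq_zero] at h
  exact ⟨h.resolve_right one_ne_zero, rfl⟩

theorem quadGen_ne_smul_one (h2 : (2 : F) ≠ 0) {H : F × F × F} (hH : quadDisc H ≠ 0) (c : F) :
    quadGen H ≠ c • 1 := by
  obtain ⟨A, B, C⟩ := H
  intro h
  simp only [quadGen, Matrix.one_fin_two, Matrix.smul_of, Matrix.smul_cons, smul_eq_mul,
    Matrix.smul_empty, mul_one, mul_zero, neg_eq_zero, mul_eq_zero,
    EmbeddingLike.apply_eq_iff_eq, Matrix.vecCons_inj, and_true] at h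
  obtain ⟨⟨hB₁, hC⟩, hA, hB₂⟩ := h
  have hB : 2 * B = 0 := by linear_combination hB₂ - hB₁
  simp [quadDisc, hA.resolve_left h2, hC.resolve_left h2, (mul_eq_zero.1 hB).resolve_left h2]
    at hH

theorem eq_zero_of_smul_add_smul_bcfCovariant_eq_zero {f : BCF F} {p q : F}
    (h2 : (2 : F) ≠ 0) (hf : bcfDisc f ≠ 0) (h : p • f + q • bcfCovariant f = 0) :
    p = 0 ∧ q = 0 := by
  have hq : q = 0 := by
    obtain ⟨a, b, c, d⟩ := f
    simp only [bcfCovariant, Prod.smul_mk, Prod.mk_add_mk, smul_eq_mul, Prod.mk_eq_zero] at h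
    obtain ⟨ha, hb, hc, hd⟩ := h
    -- pair with `f` under the `SL₂`-invariant alternating form `a d' - 3 b c' + 3 c b' - d a'`
    have : q * (2 * bcfDisc (a, b, c, d)) = 0 := by
      simp only [bcfDisc]
      linear_combination -(a * hd - 3 * b * hc + 3 * c * hb - d * ha)
    exact (mul_eq_zero.1 this).resolve_right (mul_ne_zero h2 hf)
  subst hq
  rw [zero_smul, add_zero, smul_eq_zero] at h
  refine ⟨h.resolve_right ?_, rfl⟩
  rintro rfl
  exact hf (by simp [bcfDisc])

def quadAlgEquiv : QuadAlg F k ≃ₐ[F] QuadraticAlgebra F k 0 :=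
  AlgEquiv.ofAlgHom
    (AdjoinRoot.liftAlgHom _ (Algebra.ofId F _) ω
      (by simp [sq, omega_mul_omega_eq_add, Algebra.algebraMap_eq_smul_one]))
    (QuadraticAlgebra.lift ⟨AdjoinRoot.root _, by
      have := AdjoinRoot.eval₂_root (X ^ 2 - C k : F[X])
      simp only [sq, eval₂_sub, eval₂_mul, eval₂_X, eval₂_C, Algebra.smul_def,
        AdjoinRoot.algebraMap_eq, mul_one, map_zero, zero_mul, add_zero] at this ⊢
      exact sub_eq_zero.1 this⟩)
    (QuadraticAlgebra.algHom_ext (by simp))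
    (AdjoinRoot.algHom_ext (by simp))

theorem norm_quadAlgEquiv (x : QuadAlg F k) : (quadAlgEquiv x).norm = Algebra.norm F x := by
  rw [← Algebra.norm_eq_of_algEquiv quadAlgEquiv, Algebra.norm_apply, ← det_toLinearMap_eq_norm]
  rfl

variable {f : BCF F} (h2 : (2 : F) ≠ 0) (hf : bcfDisc f = 4 * k)

def hessianAlgHom : QuadraticAlgebra F k 0 →ₐ[F] Matrix (Fin 2) (Fin 2) F :=
  QuadraticAlgebra.lift ⟨(2 : F)⁻¹ • quadGen (bcfHessian f), by
    rw [smul_mul_smul, quadGen_mul_self, quadDisc_bcfHessian, hf, smul_smul, zero_smul, add_zero]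
    congr 1
    field_simp
    ring⟩

theorem hessianAlgHom_apply (z : QuadraticAlgebra F k 0) :
    hessianAlgHom h2 hf z = z.re • 1 + (z.im / 2) • quadGen (bcfHessian f) := by
  rw [hessianAlgHom, lift_apply_apply, smul_smul, div_eq_mul_inv]

theorem det_hessianAlgHom (z : QuadraticAlgebra F k 0) :
    (hessianAlgHom h2 hf z).det = z.norm := by
  rw [hessianAlgHom_apply, det_smul_one_add_smul_quadGen, quadDisc_bcfHessian, hf,
    QuadraticAlgebra.norm_def]
  field_simp
  ring

def bcfOrbitMap (f : BCF F) (z : QuadraticAlgebra F k 0) : BCF F :=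
  z.re • f + (z.im / 2) • bcfCovariant f

theorem bcfOrbitMap_one (f : BCF F) : bcfOrbitMap f (1 : QuadraticAlgebra F k 0) = f := by
  simp [bcfOrbitMap]

theorem bcfAct_hessianAlgHom (z : QuadraticAlgebra F k 0) :
    bcfAct (hessianAlgHom h2 hf z) f = bcfOrbitMap f (z ^ 3) := by
  rw [hessianAlgHom_apply, bcfAct_smul_one_add_smul_quadGen, bcfOrbitMap, hf]
  simp only [pow_succ, pow_zero, one_mul, re_mul, im_mul]
  congr 2 <;> field_simp <;> ring

variable (hk : k ≠ 0)

include h2 hf hk in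
theorem bcfDisc_ne_zero : bcfDisc f ≠ 0 := by
  rw [hf]
  exact mul_ne_zero (by rw [show (4 : F) = 2 * 2 by norm_num]; exact mul_ne_zero h2 h2) hk

include h2 hf hk in
theorem bcfOrbitMap_injective :
    Function.Injective (bcfOrbitMap f : QuadraticAlgebra F k 0 → BCF F) := by
  intro z w h
  have h' : (z.re - w.re) • f + ((z.im - w.im) / 2) • bcfCovariant f = 0 := by
    rw [sub_smul, sub_div, sub_smul, ← sub_eq_zero.2 h, bcfOrbitMap, bcfOrbitMap]
    abel
  obtain ⟨hre, him⟩ :=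
    eq_zero_of_smul_add_smul_bcfCovariant_eq_zero h2 (bcfDisc_ne_zero h2 hf hk) h'
  ext
  · exact sub_eq_zero.1 hre
  · exact sub_eq_zero.1 ((div_eq_zero_iff.1 him).resolve_right h2)

include h2 hf hk in
theorem quadGen_bcfHessian_ne_smul_one (c : F) : quadGen (bcfHessian f) ≠ c • 1 :=
  quadGen_ne_smul_one h2 (by rw [quadDisc_bcfHessian]; exact bcfDisc_ne_zero h2 hf hk) c

include hk in
theorem hessianAlgHom_injective : Function.Injective (hessianAlgHom h2 hf) := by
  refine (injective_iff_map_eq_zero _).2 fun z hz => ?_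
  rw [hessianAlgHom_apply] at hz
  obtain ⟨hre, him⟩ := Matrix.eq_zero_of_smul_one_add_smul_eq_zero
    (quadGen_bcfHessian_ne_smul_one h2 hf hk) hz
  ext
  · exact hre
  · exact (div_eq_zero_iff.1 him).resolve_right h2

include hk in
theorem exists_hessianAlgHom_eq {γ : Matrix (Fin 2) (Fin 2) F} (hdet : γ.det = 1)
    (hfix : bcfAct γ f = f) : ∃ z, hessianAlgHom h2 hf z = γ := by
  have hH : quadAct γ (bcfHessian f) = bcfHessian f := by
    have := bcfHessian_bcfAct γ f
    rw [hfix, hdet, one_pow, one_smul] at this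
    exact this.symm
  obtain ⟨t, u, rfl⟩ := Matrix.exists_eq_smul_one_add_smul_of_commute
    (quadGen_bcfHessian_ne_smul_one h2 hf hk) (commute_quadGen_of_quadAct_eq hdet hH)
  exact ⟨⟨t, 2 * u⟩, by rw [hessianAlgHom_apply, mul_div_cancel_left₀ u h2]⟩

def mu3NormOneToStab : mu3NormOne F k →* bcfStab F f where
  toFun x := ⟨⟨hessianAlgHom h2 hf (quadAlgEquiv x.1), by
      rw [det_hessianAlgHom, norm_quadAlgEquiv]
      exact x.2.2⟩, by
    change bcfAct (hessianAlgHom h2 hf _) f = f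
    rw [bcfAct_hessianAlgHom, ← map_pow, ← Units.val_pow_eq_pow_val, x.2.1, Units.val_one,
      map_one, bcfOrbitMap_one]⟩
  map_one' := Subtype.ext <| Subtype.ext <| by simp
  map_mul' x y := Subtype.ext <| Subtype.ext <| by
    simp only [Subgroup.coe_mul, Units.val_mul, map_mul]
    rfl

include hk in
theorem mu3NormOneToStab_bijective : Function.Bijective (mu3NormOneToStab h2 hf) := by
  refine ⟨fun x y hxy => ?_, fun γ => ?_⟩
  · exact Subtype.ext <| Units.ext <| quadAlgEquiv.injective <|
      hessianAlgHom_injective h2 hf hk <| Subtype.ext_iff.1 <| Subtype.ext_iff.1 hxy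
  · obtain ⟨z, hz⟩ := exists_hessianAlgHom_eq h2 hf hk γ.1.2 γ.2
    have hz3 : z ^ 3 = 1 := bcfOrbitMap_injective h2 hf hk <| by
      rw [← bcfAct_hessianAlgHom h2 hf, hz, bcfOrbitMap_one]
      exact γ.2
    have hx3 : quadAlgEquiv.symm z ^ 3 = 1 := by rw [← map_pow, hz3, map_one]
    refine ⟨⟨Units.ofPowEqOne _ 3 hx3 three_ne_zero, Units.pow_ofPowEqOne _ _, ?_⟩, ?_⟩
    · rw [Units.val_ofPowEqOne, ← norm_quadAlgEquiv, AlgEquiv.apply_symm_apply,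
        ← det_hessianAlgHom h2 hf, hz]
      exact γ.1.2
    · exact Subtype.ext <| Subtype.ext <| by simp [mu3NormOneToStab, hz]

end

theorem stabilizer_iso_mu3_norm_one
    (h2 : (2 : F) ≠ 0) (hk : k ≠ 0)
    (f : BCF F) (hf : bcfDisc f = 4 * k) :
    Nonempty (bcfStab F f ≃* mu3NormOne F k) :=
  ⟨(MulEquiv.ofBijective (mu3NormOneToStab h2 hf) (mu3NormOneToStab_bijective h2 hf hk)).symm⟩

end
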